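/- arXiv:2001.08062 — 4 statements merged into one kernel-verified Lean document; each statement's English description precedes it below -/
import Mathlib

section
/- For the standard simplex in R^d with vertices 0, e_1, ..., e_d, no hyperplane in R^d simultaneously intersects all d+1 of the open regions R_1, ..., R_{d+1}, where R_i := {x ∈ R^d : x_j < 0 for all j ≠ i, and x_1 + ... + x_d > 1} for 1 ≤ i ≤ d, and R_{d+1} := {x ∈ R^d : x_j < 0 for all j ∈ [d]}. -/
/-- A hyperplane in `ℝ^d`: a nonempty affine subspace of dimension `d - 1`. -/
def IsHyperplane {d : ℕ} (f : AffineSubspace ℝ (EuclideanSpace ℝ (Fin d))) : Prop :=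
  (f : Set (EuclideanSpace ℝ (Fin d))).Nonempty ∧ Module.finrank ℝ f.direction = d - 1

theorem stmt_0 (d : ℕ) (hd : 1 ≤ d)
    (f : AffineSubspace ℝ (EuclideanSpace ℝ (Fin d))) (hf : IsHyperplane f) :
    ¬ ((∀ i : Fin d, ∃ x ∈ (f : Set (EuclideanSpace ℝ (Fin d))),
          (∀ j : Fin d, j ≠ i → x j < 0) ∧ 1 < ∑ j : Fin d, x j) ∧
       (∃ x ∈ (f : Set (EuclideanSpace ℝ (Fin d))), ∀ j : Fin d, x j < 0)) := by
  rintro ⟨h1, h2⟩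
  choose x hxf hxneg hxsum using h1
  obtain ⟨q, hqf, hqneg⟩ := h2
  classical
  -- the d+1 chosen points
  set p : Fin (d + 1) → EuclideanSpace ℝ (Fin d) :=
    fun k => if h : (k : ℕ) < d then x ⟨k, h⟩ else q with hp
  have hpf : ∀ k, p k ∈ f := by
    intro k
    by_cases h : (k : ℕ) < d
    · simp [hp, h]; exact hxf _
    · simp [hp, h]; exact hqf
  -- facet functional values
  set A : Fin (d + 1) → Fin (d + 1) → ℝ :=
    fun j k => if h : (j : ℕ) < d then p k ⟨j, h⟩ else 1 - ∑ i : Fin d, p k i with hA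
  have hA_neg : ∀ j k, j ≠ k → A j k < 0 := by
    intro j k hjk
    by_cases hj : (j : ℕ) < d
    · by_cases hk : (k : ℕ) < d
      · have hne : (⟨(j : ℕ), hj⟩ : Fin d) ≠ ⟨(k : ℕ), hk⟩ := by
          intro h
          apply hjk
          have := congrArg Fin.val h
          simp at this
          exact Fin.ext this
        simpa [hA, hp, hj, hk] using hxneg ⟨k, hk⟩ ⟨j, hj⟩ hne
      · simpa [hA, hp, hj, hk] using hqneg ⟨j, hj⟩
    · by_cases hk : (k : ℕ) < d
      · have := hxsum ⟨k, hk⟩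
        simp only [hA, hp]
        rw [dif_neg hj, dif_pos hk]
        linarith
      · exfalso
        apply hjk
        have hj' : (j : ℕ) = d := by omega
        have hk' : (k : ℕ) = d := by omega
        exact Fin.ext (hj'.trans hk'.symm)
  have hA_sum : ∀ k, ∑ j : Fin (d + 1), A j k = 1 := by
    intro k
    rw [Fin.sum_univ_castSucc]
    have h1 : ∀ j : Fin d, A j.castSucc k = p k j := by
      intro j
      have hj : ((j.castSucc : Fin (d + 1)) : ℕ) < d := j.isLt
      simp [hA, hj]
    have h2 : A (Fin.last d) k = 1 - ∑ i : Fin d, p k i := by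
      simp [hA]
    rw [h2, Finset.sum_congr rfl fun j _ => h1 j]
    ring
  -- the points are affinely dependent
  have hdep : ¬ AffineIndependent ℝ p := by
    intro hind
    have hcard : Fintype.card (Fin (d + 1)) = d + 1 := by simp
    have hrk := hind.finrank_vectorSpan hcard
    have hle : vectorSpan ℝ (Set.range p) ≤ f.direction := by
      apply vectorSpan_mono
      rintro _ ⟨k, rfl⟩
      exact hpf k
    have := Submodule.finrank_mono hle
    rw [hrk, hf.2] at this
    omega
  rw [affineIndependent_iff] at hdep
  push_neg at hdep
  obtain ⟨s, w₀, hw₀sum, hw₀vsum, k₀, hk₀s, hk₀⟩ := hdep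
  set w : Fin (d + 1) → ℝ := fun k => if k ∈ s then w₀ k else 0 with hw
  have hwsum : ∑ k, w k = 0 := by
    rw [← hw₀sum]
    rw [Finset.sum_ite_mem, Finset.univ_inter]
  have hwvsum : ∑ k, w k • p k = 0 := by
    rw [← hw₀vsum]
    have : ∀ k, w k • p k = if k ∈ s then w₀ k • p k else 0 := by
      intro k
      by_cases h : k ∈ s <;> simp [hw, h]
    rw [Finset.sum_congr rfl fun k _ => this k, Finset.sum_ite_mem, Finset.univ_inter]
  have hwk₀ : w k₀ ≠ 0 := by simp [hw, hk₀s, hk₀]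
  -- the key identity: for each j, ∑ k, w k * A j k = 0
  have hkey : ∀ j, ∑ k, w k * A j k = 0 := by
    intro j
    by_cases hj : (j : ℕ) < d
    · have : ∑ k, w k * A j k = (∑ k, w k • p k) ⟨j, hj⟩ := by
        rw [WithLp.ofLp_sum, Finset.sum_apply]
        apply Finset.sum_congr rfl
        intro k _
        simp [hA, hj, PiLp.smul_apply, smul_eq_mul]
      rw [this, hwvsum]
      rfl
    · have : ∀ k, w k * A j k = w k - ∑ i : Fin d, w k * p k i := by
        intro k
        simp only [hA]
        rw [dif_neg hj, mul_sub, mul_one, Finset.mul_sum]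
      rw [Finset.sum_congr rfl fun k _ => this k, Finset.sum_sub_distrib, hwsum,
        Finset.sum_comm]
      have : ∀ i : Fin d, ∑ k, w k * p k i = 0 := by
        intro i
        have h0 : (0 : EuclideanSpace ℝ (Fin d)) i = 0 := rfl
        rw [← h0, ← hwvsum, WithLp.ofLp_sum, Finset.sum_apply]
        apply Finset.sum_congr rfl
        intro k _
        simp [PiLp.smul_apply, smul_eq_mul]
      rw [Finset.sum_congr rfl fun i _ => this i]
      simp
  -- sign argument
  set P : Finset (Fin (d + 1)) := Finset.univ.filter fun k => 0 < w k with hPdef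
  set N : Finset (Fin (d + 1)) := Finset.univ.filter fun k => w k < 0 with hNdef
  have hPN : Disjoint P N := by
    rw [Finset.disjoint_left]
    intro k hk hk'
    simp [hPdef] at hk
    simp [hNdef] at hk'
    linarith
  have hNne : N.Nonempty := by
    by_contra hN
    rw [Finset.not_nonempty_iff_eq_empty] at hN
    have hge : ∀ k ∈ Finset.univ, 0 ≤ w k := by
      intro k _
      by_contra h
      have : k ∈ N := by simp [hNdef]; linarith
      simp [hN] at this
    have := (Finset.sum_eq_zero_iff_of_nonneg hge).1 hwsum k₀ (Finset.mem_univ _)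
    exact hwk₀ this
  have hPne : P.Nonempty := by
    by_contra hP
    rw [Finset.not_nonempty_iff_eq_empty] at hP
    have hle : ∀ k ∈ Finset.univ, w k ≤ 0 := by
      intro k _
      by_contra h
      have : k ∈ P := by simp [hPdef]; linarith
      simp [hP] at this
    have := (Finset.sum_eq_zero_iff_of_nonpos hle).1 hwsum k₀ (Finset.mem_univ _)
    exact hwk₀ this
  have hPsubNc : P ⊆ Nᶜ := by
    intro k hk
    simp [hNdef, Finset.mem_compl]
    simp [hPdef] at hk
    linarith
  -- T := ∑ j ∈ N, ∑ k ∈ P, w k * A j k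
  have hT_neg : ∑ j ∈ N, ∑ k ∈ P, w k * A j k < 0 := by
    have : ∀ j ∈ N, ∑ k ∈ P, w k * A j k < 0 := by
      intro j hj
      calc ∑ k ∈ P, w k * A j k < ∑ k ∈ P, (0:ℝ) := by
            apply Finset.sum_lt_sum_of_nonempty hPne
            intro k hk
            have hwk : 0 < w k := by simpa [hPdef] using hk
            have hjk : j ≠ k := by
              rintro rfl
              exact Finset.disjoint_left.1 hPN hk hj
            exact mul_neg_of_pos_of_neg hwk (hA_neg j k hjk)
        _ = 0 := Finset.sum_const_zero
    calc ∑ j ∈ N, ∑ k ∈ P, w k * A j k < ∑ j ∈ N, (0:ℝ) :=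
          Finset.sum_lt_sum_of_nonempty hNne this
      _ = 0 := Finset.sum_const_zero
  -- rewrite T as a positive quantity
  have hPNc : ∀ j, ∑ k ∈ P, w k * A j k = - ∑ k ∈ N, w k * A j k := by
    intro j
    have hsplit : ∑ k ∈ P, w k * A j k + ∑ k ∈ Pᶜ, w k * A j k = 0 := by
      rw [Finset.sum_add_sum_compl]
      exact hkey j
    have hPc : ∑ k ∈ Pᶜ, w k * A j k = ∑ k ∈ N, w k * A j k := by
      apply (Finset.sum_subset _ _).symm
      · intro k hk
        rw [Finset.mem_compl]
        exact Finset.disjoint_right.1 hPN hk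
      · intro k hk hk'
        have h1 : ¬ 0 < w k := by
          intro h
          have : k ∈ P := by simp [hPdef, h]
          exact (Finset.mem_compl.1 hk) this
        have h2 : ¬ w k < 0 := by
          intro h
          exact hk' (by simp [hNdef, h])
        have : w k = 0 := le_antisymm (not_lt.1 h1) (not_lt.1 h2)
        rw [this, zero_mul]
    linarith [hsplit, hPc]
  have hT_pos : 0 < ∑ j ∈ N, ∑ k ∈ P, w k * A j k := by
    have hTeq : ∑ j ∈ N, ∑ k ∈ P, w k * A j k
        = ∑ k ∈ N, (-w k) * ∑ j ∈ N, A j k := by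
      calc ∑ j ∈ N, ∑ k ∈ P, w k * A j k
          = ∑ j ∈ N, ∑ k ∈ N, (-w k) * A j k := by
            apply Finset.sum_congr rfl
            intro j _
            rw [hPNc j, ← Finset.sum_neg_distrib]
            apply Finset.sum_congr rfl
            intro k _
            ring
        _ = ∑ k ∈ N, ∑ j ∈ N, (-w k) * A j k := Finset.sum_comm
        _ = ∑ k ∈ N, (-w k) * ∑ j ∈ N, A j k := by
            apply Finset.sum_congr rfl
            intro k _
            rw [Finset.mul_sum]
    rw [hTeq]
    apply Finset.sum_pos _ hNne
    intro k hk
    have hwk : w k < 0 := by simpa [hNdef] using hk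
    have hAk : 0 < ∑ j ∈ N, A j k := by
      have hsplit : ∑ j ∈ N, A j k + ∑ j ∈ Nᶜ, A j k = 1 := by
        rw [Finset.sum_add_sum_compl]
        exact hA_sum k
      have hneg : ∑ j ∈ Nᶜ, A j k < 0 := by
        calc ∑ j ∈ Nᶜ, A j k < ∑ j ∈ Nᶜ, (0:ℝ) := by
              apply Finset.sum_lt_sum_of_nonempty (hPne.mono hPsubNc)
              intro j hj
              have hjk : j ≠ k := by
                intro h
                exact (Finset.mem_compl.1 hj) (h ▸ hk)
              exact hA_neg j k hjk
          _ = 0 := Finset.sum_const_zero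
      linarith
    exact mul_pos (by linarith) hAk
  linarith
end

section
/- In the plane (d = 2), no line simultaneously intersects all three open regions R_1 = {x > 0 ∧ y < 0 ∧ x + y > 1}, R_2 = {x < 0 ∧ y > 0 ∧ x + y > 1}, and R_3 = {x < 0 ∧ y < 0}. -/
/-! Of three collinear points one lies between the other two, and convex sets are closed under
betweenness. But `R₃` and `R₁` lie in the half-plane `y < 0`, which misses `R₂`; `R₃` and `R₂` lie
in the half-plane `x < 0`, which misses `R₁`; and `R₁`, `R₂` lie in the half-plane `x + y > 1`,
which misses `R₃`. So no point of the three can lie between the other two. -/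

/-- A line in `ℝ²`: a nonempty affine subspace of dimension `1`. -/
def IsLine (f : AffineSubspace ℝ (EuclideanSpace ℝ (Fin 2))) : Prop :=
  (f : Set (EuclideanSpace ℝ (Fin 2))).Nonempty ∧ Module.finrank ℝ f.direction = 1

theorem AffineSubspace.collinear_of_subset {k V P : Type*} [DivisionRing k] [AddCommGroup V]
    [Module k V] [AddTorsor V P] {f : AffineSubspace k P} (hf : Module.rank k f.direction ≤ 1)
    {s : Set P} (hs : s ⊆ f) : Collinear k s :=
  (Submodule.rank_mono (vectorSpan_mono k hs)).trans hf

theorem IsLine.collinear_of_subset {f : AffineSubspace ℝ (EuclideanSpace ℝ (Fin 2))}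
    (hf : IsLine f) {s : Set (EuclideanSpace ℝ (Fin 2))} (hs : s ⊆ f) : Collinear ℝ s :=
  f.collinear_of_subset (by rw [← Module.finrank_eq_rank, hf.2]; rfl) hs

theorem EuclideanSpace.convex_coord_lt {ι : Type*} (i : ι) (r : ℝ) :
    Convex ℝ {p : EuclideanSpace ℝ ι | p i < r} :=
  convex_halfSpace_lt (proj i : EuclideanSpace ℝ ι →L[ℝ] ℝ).isLinear r

theorem EuclideanSpace.convex_coord_add_coord_gt {ι : Type*} (i j : ι) (r : ℝ) :
    Convex ℝ {p : EuclideanSpace ℝ ι | r < p i + p j} :=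
  convex_halfSpace_gt (proj i + proj j : EuclideanSpace ℝ ι →L[ℝ] ℝ).isLinear r

theorem stmt_2 (f : AffineSubspace ℝ (EuclideanSpace ℝ (Fin 2))) (hf : IsLine f) :
    ¬ ((∃ x ∈ (f : Set (EuclideanSpace ℝ (Fin 2))), 0 < x 0 ∧ x 1 < 0 ∧ 1 < x 0 + x 1) ∧
       (∃ x ∈ (f : Set (EuclideanSpace ℝ (Fin 2))), x 0 < 0 ∧ 0 < x 1 ∧ 1 < x 0 + x 1) ∧
       (∃ x ∈ (f : Set (EuclideanSpace ℝ (Fin 2))), x 0 < 0 ∧ x 1 < 0)) := by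
  rintro ⟨⟨a, ha, ha0, ha1, ha01⟩, ⟨b, hb, hb0, hb1, hb01⟩, ⟨c, hc, hc0, hc1⟩⟩
  have habc : Collinear ℝ {a, b, c} :=
    hf.collinear_of_subset (by simp [Set.insert_subset_iff, ha, hb, hc])
  rcases habc.wbtw_or_wbtw_or_wbtw with h | h | h
  · have : b 1 < 0 := (EuclideanSpace.convex_coord_lt 1 0).mem_of_wbtw h ha1 hc1
    linarith
  · have : 1 < c 0 + c 1 :=
      (EuclideanSpace.convex_coord_add_coord_gt 0 1 1).mem_of_wbtw h hb01 ha01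
    linarith
  · have : a 0 < 0 := (EuclideanSpace.convex_coord_lt 0 0).mem_of_wbtw h hc0 hb0
    linarith
end

section
/- In the plane (d = 2), no line simultaneously intersects all three open regions S_1 = {x < 0 ∧ y > 0 ∧ x + y < 1}, S_2 = {x > 0 ∧ y < 0 ∧ x + y < 1}, and S_3 = {x > 0 ∧ y > 0 ∧ x + y > 1}. -/
theorem IsLine.collinear {f : AffineSubspace ℝ (EuclideanSpace ℝ (Fin 2))} (hf : IsLine f) :
    Collinear ℝ (f : Set (EuclideanSpace ℝ (Fin 2))) := by
  rw [collinear_iff_finrank_le_one, ← f.direction_eq_vectorSpan, hf.2]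

theorem not_collinear_of_convex_separation {V : Type*} [AddCommGroup V] [Module ℝ V]
    {a b c : V} {s t u : Set V} (hs : Convex ℝ s) (ht : Convex ℝ t) (hu : Convex ℝ u)
    (has : a ∉ s) (hbs : b ∈ s) (hcs : c ∈ s) (hat : a ∈ t) (hbt : b ∉ t) (hct : c ∈ t)
    (hau : a ∈ u) (hbu : b ∈ u) (hcu : c ∉ u) : ¬ Collinear ℝ ({a, b, c} : Set V) := by
  intro h
  rcases h.wbtw_or_wbtw_or_wbtw with h | h | h
  · exact hbt (ht.mem_of_wbtw h hat hct)
  · exact hcu (hu.mem_of_wbtw h hbu hau)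
  · exact has (hs.mem_of_wbtw h hcs hbs)

theorem stmt_3 (f : AffineSubspace ℝ (EuclideanSpace ℝ (Fin 2))) (hf : IsLine f) :
    ¬ ((∃ x ∈ (f : Set (EuclideanSpace ℝ (Fin 2))), x 0 < 0 ∧ 0 < x 1 ∧ x 0 + x 1 < 1) ∧
       (∃ x ∈ (f : Set (EuclideanSpace ℝ (Fin 2))), 0 < x 0 ∧ x 1 < 0 ∧ x 0 + x 1 < 1) ∧
       (∃ x ∈ (f : Set (EuclideanSpace ℝ (Fin 2))), 0 < x 0 ∧ 0 < x 1 ∧ 1 < x 0 + x 1)) := by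
  rintro ⟨⟨a, ha, ha₀, ha₁, ha₀₁⟩, ⟨b, hb, hb₀, hb₁, hb₀₁⟩, ⟨c, hc, hc₀, hc₁, hc₀₁⟩⟩
  have hx : IsLinearMap ℝ (fun p : EuclideanSpace ℝ (Fin 2) => p 0) :=
    ⟨fun _ _ => rfl, fun _ _ => rfl⟩
  have hy : IsLinearMap ℝ (fun p : EuclideanSpace ℝ (Fin 2) => p 1) :=
    ⟨fun _ _ => rfl, fun _ _ => rfl⟩
  have hxy : IsLinearMap ℝ (fun p : EuclideanSpace ℝ (Fin 2) => p 0 + p 1) :=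
    (hx.mk' _ + hy.mk' _).isLinear
  refine not_collinear_of_convex_separation (convex_halfSpace_gt hx 0) (convex_halfSpace_gt hy 0)
    (convex_halfSpace_lt hxy 1) ha₀.not_gt hb₀ hc₀ ha₁ hb₁.not_gt hc₁ ha₀₁ hb₀₁ hc₀₁.not_gt
    (hf.collinear.subset <|
      Set.insert_subset ha <| Set.insert_subset hb <| Set.singleton_subset_iff.2 hc)
end

section
/- Let d ≥ 2 and ε > 0, and let p_1, ..., p_n be independent uniform random points in the unit ball B_d ⊂ R^d. Let M = n^{d+1+ε}. Then with probability at least 1 − C/n^ε (for a constant C depending only on d), for every (d+1)-element subset {i_0, ..., i_d} of indices and every k, the distance from p_{i_k} to the hyperplane spanned by the other d points of the subset exceeds 2√d / M. -/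
open MeasureTheory

/-- The uniform probability measure on the closed unit ball of `ℝ^d`. -/
noncomputable def unifBall (d : ℕ) : Measure (EuclideanSpace ℝ (Fin d)) :=
  (volume (Metric.closedBall (0 : EuclideanSpace ℝ (Fin d)) 1))⁻¹ •
    volume.restrict (Metric.closedBall (0 : EuclideanSpace ℝ (Fin d)) 1)

/-!
Conditionally on the other `d` points of a `(d+1)`-subset, the point `p i` is `r`-close to their
affine span only if it falls into a slab of width `2r` around a proper affine subspace, and a slab
meets the unit ball in volume at most `2^d r`. So each of the `(d+1) * choose n (d+1)` bad events
has probability `O(r)`, and for `r = 2√d / n^(d+1+ε)` the union bound gives `O(n^(-ε))`.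
The conditioning needs measurability of the distance to the span, which holds because it is an
infimum, over affine weights, of continuous functions of the configuration, hence upper
semicontinuous.
-/

open Metric Module Finset
open scoped ENNReal InnerProductSpace

theorem MeasureTheory.Measure.pi_le_of_forall_update_le {ι : Type*} [Fintype ι] [DecidableEq ι]
    {X : ι → Type*} [∀ i, MeasurableSpace (X i)] (μ : ∀ i, Measure (X i))
    [∀ i, IsProbabilityMeasure (μ i)] (i : ι) {T : Set (∀ i, X i)} (hT : MeasurableSet T)
    {c : ℝ≥0∞} (hc : ∀ p, μ i {x | Function.update p i x ∈ T} ≤ c) :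
    Measure.pi μ T ≤ c := by
  have hslice : ∫⋯∫⁻_{i}, T.indicator 1 ∂μ ≤ ∫⋯∫⁻_{i}, (fun _ ↦ c) ∂μ := by
    intro p
    simp only [lmarginal_singleton, lintegral_const, measure_univ, mul_one]
    change ∫⁻ x, (Function.update p i ⁻¹' T).indicator 1 x ∂μ i ≤ c
    rw [lintegral_indicator_one (measurable_update p hT)]
    exact hc p
  rw [← lintegral_indicator_one hT]
  simpa using lintegral_le_of_lmarginal_le {i} (measurable_one.indicator hT) measurable_const hslice

section AffineSpan

variable {ι E : Type*} [Fintype ι] [NormedAddCommGroup E] [NormedSpace ℝ E]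

theorem infDist_affineSpan_range_eq_iInf (x : E) (q : ι → E) :
    infDist x (affineSpan ℝ (Set.range q)) =
      ⨅ w : {w : ι → ℝ // ∑ j, w j = 1}, dist x (∑ j, w.1 j • q j) := by
  classical
  let g : {w : ι → ℝ // ∑ j, w j = 1} → affineSpan ℝ (Set.range q) := fun w ↦
    ⟨∑ j, w.1 j • q j, by
      rw [← Finset.univ.affineCombination_eq_linear_combination q _ w.2]
      exact affineCombination_mem_affineSpan w.2 q⟩
  have hg : Function.Surjective g := by
    rintro ⟨y, hy⟩
    obtain ⟨w, hw, rfl⟩ := eq_affineCombination_of_mem_affineSpan_of_fintype hy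
    exact ⟨⟨w, hw⟩, Subtype.ext (Finset.univ.affineCombination_eq_linear_combination q w hw).symm⟩
  rw [infDist_eq_iInf]
  exact (hg.iInf_comp fun y ↦ dist x y).symm

theorem upperSemicontinuous_infDist_affineSpan :
    UpperSemicontinuous fun y : E × (ι → E) ↦ infDist y.1 (affineSpan ℝ (Set.range y.2)) := by
  simp_rw [infDist_affineSpan_range_eq_iInf]
  refine upperSemicontinuous_ciInf (fun y ↦ ⟨0, ?_⟩) fun w ↦ Continuous.upperSemicontinuous ?_
  · rintro _ ⟨w, rfl⟩; exact dist_nonneg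
  · fun_prop

theorem measurable_infDist_affineSpan [MeasurableSpace E] [BorelSpace E]
    [SecondCountableTopology E] :
    Measurable fun y : E × (ι → E) ↦ infDist y.1 (affineSpan ℝ (Set.range y.2)) :=
  upperSemicontinuous_infDist_affineSpan.measurable

end AffineSpan

section Slab

variable {E : Type*} [NormedAddCommGroup E] [InnerProductSpace ℝ E]

theorem AffineSubspace.exists_norm_eq_one_mem_direction_orthogonal [FiniteDimensional ℝ E]
    {A : AffineSubspace ℝ E} (hA : A.direction ≠ ⊤) : ∃ u : E, ‖u‖ = 1 ∧ u ∈ A.directionᗮ := by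
  obtain ⟨v, hv, hv0⟩ := Submodule.exists_mem_ne_zero_of_ne_bot
    fun h ↦ hA (Submodule.orthogonal_eq_bot_iff.mp h)
  exact ⟨‖v‖⁻¹ • v, norm_smul_inv_norm hv0, Submodule.smul_mem _ _ hv⟩

theorem abs_inner_sub_le_infDist {A : AffineSubspace ℝ E} {u : E} (hu : ‖u‖ = 1)
    (huA : u ∈ A.directionᗮ) {a : E} (ha : a ∈ A) (x : E) : |⟪u, x - a⟫_ℝ| ≤ infDist x A := by
  refine (le_infDist ⟨a, ha⟩).2 fun y hy ↦ ?_
  have hya : ⟪u, y - a⟫_ℝ = 0 := by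
    rw [real_inner_comm]; exact huA _ (A.vsub_mem_direction hy ha)
  calc |⟪u, x - a⟫_ℝ| = |⟪u, x - y⟫_ℝ| := by
        rw [← sub_add_sub_cancel x y a, inner_add_right, hya, add_zero]
    _ ≤ ‖u‖ * ‖x - y‖ := abs_real_inner_le_norm _ _
    _ = dist x y := by rw [hu, one_mul, dist_eq_norm]

variable [FiniteDimensional ℝ E] [MeasurableSpace E] [BorelSpace E]

/-- In coordinates of an orthonormal basis starting with `u`, the set lies in a box with one side
`2 * r` and all other sides `2`. -/
theorem volume_slab_inter_closedBall_le {u : E} (hu : ‖u‖ = 1) (a : E) (r : ℝ) :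
    volume ({x | |⟪u, x - a⟫_ℝ| ≤ r} ∩ closedBall 0 1) ≤
      2 ^ finrank ℝ E * ENNReal.ofReal r := by
  classical
  set d := finrank ℝ E
  have : Nontrivial E := nontrivial_of_ne u 0 (by rintro rfl; simp at hu)
  set i₀ : Fin d := ⟨0, finrank_pos⟩
  obtain ⟨b, hb⟩ := Orthonormal.exists_orthonormalBasis_extension_of_card_eq (𝕜 := ℝ)
    (v := fun _ : Fin d ↦ u) (s := {i₀}) (by simp [d])
    ⟨fun _ ↦ hu, fun i j hij ↦ absurd (Subtype.ext (i.2.trans j.2.symm)) hij⟩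
  set c := ⟪u, a⟫_ℝ
  set box : Fin d → Set ℝ := fun j ↦ if j = i₀ then Set.Icc (c - r) (c + r) else Set.Icc (-1) 1
  have hφ : MeasurePreserving (fun x ↦ WithLp.ofLp (b.repr x)) volume volume :=
    (PiLp.volume_preserving_ofLp _).comp b.measurePreserving_repr
  have hsub : {x | |⟪u, x - a⟫_ℝ| ≤ r} ∩ closedBall 0 1 ⊆
      (fun x ↦ WithLp.ofLp (b.repr x)) ⁻¹' Set.univ.pi box := by
    rintro x ⟨hxa : |⟪u, x - a⟫_ℝ| ≤ r, hx⟩ j -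
    simp only [box, b.repr_apply_apply]
    split_ifs with hj
    · rw [hj, hb i₀ rfl]
      rw [inner_sub_right, abs_le] at hxa
      constructor <;> linarith [hxa.1, hxa.2]
    · refine Set.mem_Icc.mpr (abs_le.mp ((abs_real_inner_le_norm _ _).trans ?_))
      rw [b.orthonormal.1 j, one_mul]
      exact mem_closedBall_zero_iff.mp hx
  have hbox : volume (Set.univ.pi box) = 2 ^ d * ENNReal.ofReal r := by
    have hside : ∀ j ∈ Finset.univ.erase i₀, volume (box j) = 2 := by
      intro j hj
      norm_num [box, Finset.ne_of_mem_erase hj, Real.volume_Icc]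
    rw [volume_pi_pi, ← Finset.mul_prod_erase _ _ (Finset.mem_univ i₀),
      Finset.prod_congr rfl hside, Finset.prod_const, Finset.card_erase_of_mem (Finset.mem_univ _),
      Finset.card_univ, Fintype.card_fin]
    simp only [box, if_pos, Real.volume_Icc]
    have hd : (2 : ℝ≥0∞) ^ d = 2 * 2 ^ (d - 1) := by
      rw [← pow_succ', Nat.sub_add_cancel finrank_pos]
    rw [show c + r - (c - r) = 2 * r by ring, ENNReal.ofReal_mul zero_le_two,
      ENNReal.ofReal_ofNat, hd]
    ring
  calc _ ≤ volume ((fun x ↦ WithLp.ofLp (b.repr x)) ⁻¹' Set.univ.pi box) := measure_mono hsub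
    _ = volume (Set.univ.pi box) :=
      hφ.measure_preimage (MeasurableSet.univ_pi fun j ↦ by
        simp only [box]; split_ifs <;> exact measurableSet_Icc).nullMeasurableSet
    _ = _ := hbox

end Slab

theorem measureReal_closedBall_pos {X : Type*} [PseudoMetricSpace X] [ProperSpace X]
    [MeasurableSpace X] [OpensMeasurableSpace X] (μ : Measure X) [μ.IsOpenPosMeasure]
    [IsFiniteMeasureOnCompacts μ] (x : X) {r : ℝ} (hr : 0 < r) : 0 < μ.real (closedBall x r) :=
  ENNReal.toReal_pos (measure_closedBall_pos μ x hr).ne' measure_closedBall_lt_top.ne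

section UnifBall

variable {d : ℕ}

theorem unifBall_apply (S : Set (EuclideanSpace ℝ (Fin d))) :
    unifBall d S =
      volume (S ∩ closedBall 0 1) / volume (closedBall (0 : EuclideanSpace ℝ (Fin d)) 1) := by
  rw [unifBall, Measure.smul_apply, Measure.restrict_apply' measurableSet_closedBall, smul_eq_mul,
    ENNReal.div_eq_inv_mul]

instance : IsProbabilityMeasure (unifBall d) :=
  ⟨by rw [unifBall_apply, Set.univ_inter, ENNReal.div_self (measure_closedBall_pos _ _ one_pos).ne'
    measure_closedBall_lt_top.ne]⟩

theorem unifBall_setOf_infDist_le_le {A : AffineSubspace ℝ (EuclideanSpace ℝ (Fin d))}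
    (hA : A.direction ≠ ⊤) (hA' : (A : Set (EuclideanSpace ℝ (Fin d))).Nonempty) (r : ℝ) :
    unifBall d {x | infDist x A ≤ r} ≤
      ENNReal.ofReal (2 ^ d * r / volume.real (closedBall (0 : EuclideanSpace ℝ (Fin d)) 1)) := by
  obtain ⟨u, hu, huA⟩ := A.exists_norm_eq_one_mem_direction_orthogonal hA
  obtain ⟨a, ha⟩ := hA'
  have hslab : {x | infDist x A ≤ r} ∩ closedBall 0 1 ⊆
      {x | |⟪u, x - a⟫_ℝ| ≤ r} ∩ closedBall 0 1 :=
    Set.inter_subset_inter_left _ fun x hx ↦ (abs_inner_sub_le_infDist hu huA ha x).trans hx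
  rw [unifBall_apply, ENNReal.ofReal_div_of_pos (measureReal_closedBall_pos _ _ one_pos),
    ofReal_measureReal measure_closedBall_lt_top.ne, ENNReal.ofReal_mul (by positivity),
    ENNReal.ofReal_pow zero_le_two, ENNReal.ofReal_ofNat]
  gcongr
  simpa using (measure_mono hslab).trans (volume_slab_inter_closedBall_le hu a r)

theorem pi_unifBall_setOf_infDist_affineSpan_le {ι : Type*} [Fintype ι] {i : ι} {t : Finset ι}
    (hit : i ∉ t) (ht : t.Nonempty) (htd : #t ≤ d) (r : ℝ) :
    Measure.pi (fun _ : ι ↦ unifBall d) {p | infDist (p i) (affineSpan ℝ (p '' t)) ≤ r} ≤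
      ENNReal.ofReal (2 ^ d * r / volume.real (closedBall (0 : EuclideanSpace ℝ (Fin d)) 1)) := by
  classical
  refine Measure.pi_le_of_forall_update_le _ i ?_ fun p ↦ ?_
  · simp_rw [Set.image_eq_range]
    have hmeas : Measurable fun p : ι → EuclideanSpace ℝ (Fin d) ↦
        (p i, fun j : (t : Set ι) ↦ p j) :=
      (measurable_pi_apply i).prodMk (measurable_pi_lambda _ fun j ↦ measurable_pi_apply _)
    exact (measurable_infDist_affineSpan.comp hmeas) measurableSet_Iic
  · have himage : ∀ x, Function.update p i x '' t = p '' t := fun x ↦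
      Set.image_congr fun j hj ↦ Function.update_of_ne (ne_of_mem_of_not_mem hj hit) _ _
    simp only [Set.mem_ofPred_eq, Function.update_self, himage]
    refine unifBall_setOf_infDist_le_le ?_ ?_ r
    · rw [direction_affineSpan]
      intro htop
      have := ht.card_pos
      have := finrank_vectorSpan_image_finset_le ℝ p t (n := #t - 1) (by omega)
      rw [Finset.coe_image, htop, finrank_top, finrank_euclideanSpace_fin] at this
      omega
    · obtain ⟨j, hj⟩ := ht
      exact ⟨p j, subset_affineSpan ℝ _ (Set.mem_image_of_mem p hj)⟩

theorem pi_unifBall_setOf_exists_infDist_affineSpan_le {ι : Type*} [Fintype ι] [DecidableEq ι]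
    (hd : d ≠ 0) (r : ℝ) :
    Measure.pi (fun _ : ι ↦ unifBall d)
      {p | ∃ s : Finset ι, #s = d + 1 ∧ ∃ i ∈ s,
        infDist (p i) (affineSpan ℝ (p '' ↑(s.erase i))) ≤ r} ≤
      ENNReal.ofReal ((Fintype.card ι).choose (d + 1) * (d + 1) *
        (2 ^ d * r / volume.real (closedBall (0 : EuclideanSpace ℝ (Fin d)) 1))) := by
  set a := 2 ^ d * r / volume.real (closedBall (0 : EuclideanSpace ℝ (Fin d)) 1)
  set P := powersetCard (d + 1) (univ : Finset ι)
  have hsub : {p : ι → EuclideanSpace ℝ (Fin d) | ∃ s : Finset ι, #s = d + 1 ∧ ∃ i ∈ s,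
        infDist (p i) (affineSpan ℝ (p '' ↑(s.erase i))) ≤ r} ⊆
      ⋃ s ∈ P, ⋃ i ∈ s, {p | infDist (p i) (affineSpan ℝ (p '' ↑(s.erase i))) ≤ r} := by
    rintro p ⟨s, hs, i, hi, h⟩
    simp only [Set.mem_iUnion]
    exact ⟨s, mem_powersetCard_univ.2 hs, i, hi, h⟩
  have hevent : ∀ s ∈ P, ∀ i ∈ s, Measure.pi (fun _ : ι ↦ unifBall d)
      {p | infDist (p i) (affineSpan ℝ (p '' ↑(s.erase i))) ≤ r} ≤ ENNReal.ofReal a := by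
    intro s hs i hi
    have hcard : #(s.erase i) = d := by rw [card_erase_of_mem hi, mem_powersetCard_univ.1 hs]; rfl
    exact pi_unifBall_setOf_infDist_affineSpan_le (notMem_erase i s) (card_pos.1 (by omega))
      hcard.le r
  calc _ ≤ ∑ s ∈ P, ∑ i ∈ s, ENNReal.ofReal a :=
        (measure_mono hsub).trans <| (measure_biUnion_finset_le _ _).trans <| sum_le_sum fun s hs ↦
          (measure_biUnion_finset_le _ _).trans <| sum_le_sum (hevent s hs)
    _ = _ := by
      rw [sum_congr rfl fun s hs ↦ by rw [sum_const, mem_powersetCard_univ.1 hs], sum_const,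
        card_powersetCard, card_univ, ← ENNReal.ofReal_nsmul, ← ENNReal.ofReal_nsmul]
      simp [nsmul_eq_mul, mul_assoc]

end UnifBall

theorem stmt_12_general (d : ℕ) (hd : 2 ≤ d) (ε : ℝ) :
    ∃ C : ℝ, 0 < C ∧ ∀ n : ℕ, 0 < n →
      1 - ENNReal.ofReal (C / (n : ℝ) ^ ε) ≤
        (Measure.pi fun _ : Fin n => unifBall d)
          {p : Fin n → EuclideanSpace ℝ (Fin d) |
            ∀ s : Finset (Fin n), s.card = d + 1 → ∀ i ∈ s,
              2 * Real.sqrt d / (n : ℝ) ^ ((d : ℝ) + 1 + ε) <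
                Metric.infDist (p i)
                  ((affineSpan ℝ (p '' (↑(s.erase i) : Set (Fin n)))) :
                    Set (EuclideanSpace ℝ (Fin d)))} := by
  set V := volume.real (closedBall (0 : EuclideanSpace ℝ (Fin d)) 1)
  have hV : 0 < V := measureReal_closedBall_pos _ _ one_pos
  set C := (d + 1) * 2 ^ d * (2 * Real.sqrt d) / V with hC
  refine ⟨C, by positivity, fun n hn ↦ ?_⟩
  set r := 2 * Real.sqrt d / (n : ℝ) ^ ((d : ℝ) + 1 + ε) with hr
  have hn' : (0 : ℝ) < n := Nat.cast_pos.2 hn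
  have harith : (n.choose (d + 1) : ℝ) * (d + 1) * (2 ^ d * r / V) ≤ C / (n : ℝ) ^ ε := by
    have hchoose : (n.choose (d + 1) : ℝ) ≤ (n : ℝ) ^ (d + 1) := by
      exact_mod_cast Nat.choose_le_pow n (d + 1)
    have hpow : (n : ℝ) ^ ((d : ℝ) + 1 + ε) = n ^ (d + 1) * n ^ ε := by
      rw [Real.rpow_add hn', ← Real.rpow_natCast]; push_cast; rfl
    calc _ = n.choose (d + 1) / (n : ℝ) ^ (d + 1) * (C / (n : ℝ) ^ ε) := by
          rw [hr, hpow, hC]; field_simp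
      _ ≤ C / (n : ℝ) ^ ε :=
          mul_le_of_le_one_left (by positivity) (div_le_one_of_le₀ hchoose (by positivity))
  have hbad := pi_unifBall_setOf_exists_infDist_affineSpan_le (ι := Fin n) (by omega : d ≠ 0) r
  rw [Fintype.card_fin] at hbad
  refine (tsub_le_tsub_left ?_ 1).trans
    (tsub_le_iff_right.2 (measure_univ.symm.trans_le (measure_univ_le_add_compl _)))
  refine (measure_mono fun p hp ↦ ?_).trans (hbad.trans (ENNReal.ofReal_le_ofReal harith))
  simpa using hp

theorem stmt_12 (d : ℕ) (hd : 2 ≤ d) (ε : ℝ) (hε : 0 < ε) :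
    ∃ C : ℝ, 0 < C ∧ ∀ n : ℕ, 0 < n →
      1 - ENNReal.ofReal (C / (n : ℝ) ^ ε) ≤
        (Measure.pi fun _ : Fin n => unifBall d)
          {p : Fin n → EuclideanSpace ℝ (Fin d) |
            ∀ s : Finset (Fin n), s.card = d + 1 → ∀ i ∈ s,
              2 * Real.sqrt d / (n : ℝ) ^ ((d : ℝ) + 1 + ε) <
                Metric.infDist (p i)
                  ((affineSpan ℝ (p '' (↑(s.erase i) : Set (Fin n)))) :
                    Set (EuclideanSpace ℝ (Fin d)))} :=
  stmt_12_general d hd ε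
end
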